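/- Let φ : ℝ^{d₁×d₂} → ℝ be twice continuously differentiable, let k ≥ 1 be an integer, and suppose L ≥ μ ≥ 0 are constants such that μ‖E‖_F² ≤ ∇²φ(M)[E,E] ≤ L‖E‖_F² for all M, E ∈ ℝ^{d₁×d₂} with rank(M) ≤ k and rank(E) ≤ k. Then for all M₁, M₂, E ∈ ℝ^{d₁×d₂} such that rank(a·M₁ + b·M₂ + c·E) ≤ k for every a, b, c ∈ ℝ, one has |⟨∇φ(M₂) − ∇φ(M₁), E⟩ − ((L+μ)/2)·⟨M₂ − M₁, E⟩| ≤ ((L−μ)/2)·‖M₂ − M₁‖_F·‖E‖_F. -/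

import Mathlib

noncomputable section

open Matrix

attribute [local instance] Matrix.normedAddCommGroup Matrix.normedSpace

/-- Euclidean norm on `ℝⁿ`. -/
def enorm {n : ℕ} (x : Fin n → ℝ) : ℝ := Real.sqrt (∑ i, x i ^ 2)

/-- Frobenius norm of a real matrix. -/
def frob {m n : ℕ} (A : Matrix (Fin m) (Fin n) ℝ) : ℝ := Real.sqrt (∑ i, ∑ j, A i j ^ 2)

/-- Trace inner product `⟨A,B⟩ = tr(AᵀB)`. -/
def tip {m n : ℕ} (A B : Matrix (Fin m) (Fin n) ℝ) : ℝ := ∑ i, ∑ j, A i j * B i j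

/-- Spectral (operator) norm: largest singular value. -/
def opNorm {m n : ℕ} (A : Matrix (Fin m) (Fin n) ℝ) : ℝ :=
  sSup {t | ∃ x : Fin n → ℝ, _root_.enorm x ≤ 1 ∧ t = _root_.enorm (A.mulVec x)}

/-- Nuclear norm: `tr √(AᴴA)`, the sum of the singular values. -/
def nucNorm {m n : ℕ} (A : Matrix (Fin m) (Fin n) ℝ) : ℝ :=
  (let hA := Matrix.posSemidef_conjTranspose_mul_self A
   hA.1.eigenvectorUnitary.1 * Matrix.diagonal ((RCLike.ofReal : ℝ → ℝ) ∘ Real.sqrt ∘ hA.1.eigenvalues) *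
     (star hA.1.eigenvectorUnitary : Matrix (Fin n) (Fin n) ℝ)).trace

/-- The `j`-th largest singular value of a real matrix (`1`-indexed):
the list of square roots of eigenvalues of `AᴴA`, sorted in decreasing order. -/
def singVal {m n : ℕ} (A : Matrix (Fin m) (Fin n) ℝ) (j : ℕ) : ℝ :=
  (((List.ofFn ((Matrix.isHermitian_conjTranspose_mul_self A).eigenvalues)).map
      Real.sqrt).insertionSort (· ≥ ·)).getD (j - 1) 0

/-- A second-order critical point of `f`: zero gradient and positive-semidefinite
Hessian quadratic form. -/
def IsSecondOrderCriticalPoint {E : Type*} [NormedAddCommGroup E] [NormedSpace ℝ E]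
    (f : E → ℝ) (x : E) : Prop :=
  fderiv ℝ f x = 0 ∧ ∀ v : E, 0 ≤ fderiv ℝ (fun y => fderiv ℝ f y v) x v

/-- The gradient of `φ` at `M`, w.r.t. the trace inner product. -/
def gradM {m n : ℕ} (φ : Matrix (Fin m) (Fin n) ℝ → ℝ) (M : Matrix (Fin m) (Fin n) ℝ) :
    Matrix (Fin m) (Fin n) ℝ :=
  Matrix.of fun i j => fderiv ℝ φ M (Matrix.single i j 1)

/-- Hessian quadratic form `∇²φ(M)[E,E]`. -/
def hess {m n : ℕ} (φ : Matrix (Fin m) (Fin n) ℝ → ℝ) (M E : Matrix (Fin m) (Fin n) ℝ) : ℝ :=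
  fderiv ℝ (fun N => fderiv ℝ φ N E) M E

/-- Adjoint of a linear measurement map, w.r.t. the trace inner product. -/
def adj {m n p : ℕ} (A : Matrix (Fin m) (Fin n) ℝ →ₗ[ℝ] (Fin p → ℝ)) (ξ : Fin p → ℝ) :
    Matrix (Fin m) (Fin n) ℝ :=
  Matrix.of fun i j => ∑ k, ξ k * A (Matrix.single i j 1) k

/-- The subspace `S_d` of `d × d` real symmetric matrices. -/
def SymSpace (d : ℕ) : Submodule ℝ (Matrix (Fin d) (Fin d) ℝ) where
  carrier := {A | Aᵀ = A}
  add_mem' := by intro a b ha hb; simp only [Set.mem_setOf_eq, Matrix.transpose_add] at *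
                 rw [ha, hb]
  zero_mem' := by simp
  smul_mem' := by intro c A hA; simp only [Set.mem_setOf_eq, Matrix.transpose_smul] at *
                  rw [hA]

lemma mem_symSpace {d : ℕ} {A : Matrix (Fin d) (Fin d) ℝ} : A ∈ SymSpace d ↔ Aᵀ = A := Iff.rfl

lemma stdBasis_symm {d : ℕ} (i j : Fin d) :
    Matrix.single i j (1:ℝ) + Matrix.single j i 1 ∈ SymSpace d := by
  rw [mem_symSpace, Matrix.transpose_add]
  ext a b
  simp only [Matrix.add_apply, Matrix.transpose_apply, Matrix.single, Matrix.of_apply]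
  rw [add_comm]
  congr 1 <;> · congr 1; rw [eq_iff_iff, and_comm]

/-- The symmetrized elementary matrix `E_ij + E_ji` as an element of `S_d`. -/
def symBasis {d : ℕ} (i j : Fin d) : SymSpace d :=
  ⟨Matrix.single i j 1 + Matrix.single j i 1, stdBasis_symm i j⟩

lemma mmT_mem {d r : ℕ} (U : Matrix (Fin d) (Fin r) ℝ) : U * Uᵀ ∈ SymSpace d := by
  rw [mem_symSpace, Matrix.transpose_mul, Matrix.transpose_transpose]

/-- `U ↦ UUᵀ` as an element of `S_d`. -/
def mmT {d r : ℕ} (U : Matrix (Fin d) (Fin r) ℝ) : SymSpace d := ⟨U * Uᵀ, mmT_mem U⟩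

/-- The gradient of `φ : S_d → ℝ` at `M`, as the symmetric matrix representing the
derivative w.r.t. the trace inner product on `S_d`. -/
def gradS {d : ℕ} (φ : SymSpace d → ℝ) (M : SymSpace d) : Matrix (Fin d) (Fin d) ℝ :=
  Matrix.of fun i j => (1/2) * fderiv ℝ φ M (symBasis i j)

/-- Hessian quadratic form of `φ : S_d → ℝ`. -/
def hessS {d : ℕ} (φ : SymSpace d → ℝ) (M E : SymSpace d) : ℝ :=
  fderiv ℝ (fun N => fderiv ℝ φ N E) M E

/-- Adjoint of a linear map `𝒜 : S_d → ℝⁿ` w.r.t. the trace inner product on `S_d`. -/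
def adjS {d p : ℕ} (A : SymSpace d →ₗ[ℝ] (Fin p → ℝ)) (ξ : Fin p → ℝ) :
    Matrix (Fin d) (Fin d) ℝ :=
  Matrix.of fun i j => (1/2) * ∑ k, ξ k * A (symBasis i j) k

/-- `P` is the orthogonal projection matrix onto the column space of `U`:
it is symmetric, idempotent, and has the same range as `U`. -/
def IsOrthProjCol {d r : ℕ} (P : Matrix (Fin d) (Fin d) ℝ) (U : Matrix (Fin d) (Fin r) ℝ) :
    Prop :=
  Pᵀ = P ∧ P * P = P ∧ P * U = U ∧ ∃ W : Matrix (Fin r) (Fin d) ℝ, P = U * W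


/-! Along the segment from `M₁` to `M₂` every point, and every combination of `D = M₂ - M₁`
and `E`, has rank at most `k`, so the Hessian `B` there satisfies `μ‖X‖² ≤ B(X, X) ≤ L‖X‖²`
on the plane spanned by `D` and `E`. Polarizing with `X = ‖E‖D ± ‖D‖E` bounds
`|B(D, E) - (L + μ)/2 ⟨D, E⟩|` by `(L - μ)/2 ‖D‖‖E‖`, and the mean value theorem applied to
`t ↦ ⟨∇φ(M₁ + tD), E⟩` carries this bound over to the gradient difference. -/

section TwiceDifferentiable

variable {V : Type*} [NormedAddCommGroup V] [NormedSpace ℝ V] {f : V → ℝ}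

theorem ContDiff.fderiv_fderiv_apply_comm (hf : ContDiff ℝ 2 f) (x v w : V) :
    fderiv ℝ (fderiv ℝ f) x v w = fderiv ℝ (fderiv ℝ f) x w v :=
  second_derivative_symmetric (fun y => (hf.differentiable (by norm_num) y).hasFDerivAt)
    ((hf.fderiv_right (m := 1) le_rfl).differentiable one_ne_zero x).hasFDerivAt v w

theorem ContDiff.hasFDerivAt_fderiv_apply (hf : ContDiff ℝ 2 f) (x w : V) :
    HasFDerivAt (fun y => fderiv ℝ f y w)
      ((ContinuousLinearMap.apply ℝ ℝ w).comp (fderiv ℝ (fderiv ℝ f) x)) x :=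
  (ContinuousLinearMap.apply ℝ ℝ w).hasFDerivAt.comp x
    ((hf.fderiv_right (m := 1) le_rfl).differentiable one_ne_zero x).hasFDerivAt

theorem ContDiff.hasDerivAt_fderiv_apply_add_smul (hf : ContDiff ℝ 2 f) (x v w : V) (t : ℝ) :
    HasDerivAt (fun s : ℝ => fderiv ℝ f (x + s • v) w)
      (fderiv ℝ (fderiv ℝ f) (x + t • v) v w) t := by
  have hline : HasDerivAt (fun s : ℝ => x + s • v) v t := by
    simpa using ((hasDerivAt_id t).smul_const v).const_add x
  exact (hf.hasFDerivAt_fderiv_apply (x + t • v) w).comp_hasDerivAt t hline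

end TwiceDifferentiable

theorem hess_eq_fderiv_fderiv {m n : ℕ} {φ : Matrix (Fin m) (Fin n) ℝ → ℝ}
    (hφ : ContDiff ℝ 2 φ) (M E : Matrix (Fin m) (Fin n) ℝ) :
    hess φ M E = fderiv ℝ (fderiv ℝ φ) M E E :=
  congrArg (· E) (hφ.hasFDerivAt_fderiv_apply M E).fderiv

theorem frob_sq {m n : ℕ} (X : Matrix (Fin m) (Fin n) ℝ) : frob X ^ 2 = tip X X := by
  rw [frob, Real.sq_sqrt (by positivity)]
  simp only [tip, sq]

theorem frob_pos {m n : ℕ} {X : Matrix (Fin m) (Fin n) ℝ} (hX : X ≠ 0) : 0 < frob X := by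
  obtain ⟨i, j, hij⟩ : ∃ i j, X i j ≠ 0 := by
    by_contra! h
    exact hX (Matrix.ext h)
  refine Real.sqrt_pos.mpr (Finset.sum_pos' (fun _ _ => by positivity) ⟨i, Finset.mem_univ _, ?_⟩)
  exact Finset.sum_pos' (fun _ _ => by positivity) ⟨j, Finset.mem_univ _, by positivity⟩

theorem frob_smul_add_smul_sq {m n : ℕ} (s u : ℝ) (D E : Matrix (Fin m) (Fin n) ℝ) :
    frob (s • D + u • E) ^ 2 = s ^ 2 * frob D ^ 2 + 2 * s * u * tip D E + u ^ 2 * frob E ^ 2 := by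
  simp only [frob_sq, tip, Matrix.add_apply, Matrix.smul_apply, smul_eq_mul, Finset.mul_sum,
    ← Finset.sum_add_distrib]
  refine Finset.sum_congr rfl fun _ _ => Finset.sum_congr rfl fun _ _ => by ring

theorem tip_sub_left {m n : ℕ} (X Y E : Matrix (Fin m) (Fin n) ℝ) :
    tip (X - Y) E = tip X E - tip Y E := by
  simp only [tip, Matrix.sub_apply, sub_mul, Finset.sum_sub_distrib]

theorem tip_gradM {m n : ℕ} (φ : Matrix (Fin m) (Fin n) ℝ → ℝ) (M E : Matrix (Fin m) (Fin n) ℝ) :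
    tip (gradM φ M) E = fderiv ℝ φ M E := by
  have hE : E = ∑ i, ∑ j, E i j • Matrix.single i j (1 : ℝ) := by
    simpa [Matrix.smul_single] using E.matrix_eq_sum_single
  conv_rhs => rw [hE]
  simp only [map_sum, map_smul, smul_eq_mul, tip, gradM, Matrix.of_apply, mul_comm]

theorem abs_sub_mul_le_of_quadratic_sandwich {μ L a b q X Y Z : ℝ} (ha : 0 < a) (hb : 0 < b)
    (h : ∀ s u : ℝ,
      μ * (s ^ 2 * a ^ 2 + 2 * s * u * q + u ^ 2 * b ^ 2) ≤ s ^ 2 * X + 2 * s * u * Y + u ^ 2 * Z ∧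
      s ^ 2 * X + 2 * s * u * Y + u ^ 2 * Z ≤ L * (s ^ 2 * a ^ 2 + 2 * s * u * q + u ^ 2 * b ^ 2)) :
    |Y - (L + μ) / 2 * q| ≤ (L - μ) / 2 * a * b := by
  obtain ⟨l₁, u₁⟩ := h b a
  obtain ⟨l₂, u₂⟩ := h b (-a)
  have hab : 0 < 4 * (a * b) := by positivity
  rw [abs_le]
  constructor
  · refine le_of_mul_le_mul_left ?_ hab
    linear_combination l₁ + u₂
  · refine le_of_mul_le_mul_left ?_ hab
    linear_combination u₁ + l₂

theorem abs_bilin_sub_tip_le {m n : ℕ}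
    (B : Matrix (Fin m) (Fin n) ℝ →L[ℝ] Matrix (Fin m) (Fin n) ℝ →L[ℝ] ℝ) {μ L : ℝ}
    {D E : Matrix (Fin m) (Fin n) ℝ} (hBsymm : B E D = B D E)
    (hB : ∀ s u : ℝ, μ * frob (s • D + u • E) ^ 2 ≤ B (s • D + u • E) (s • D + u • E) ∧
      B (s • D + u • E) (s • D + u • E) ≤ L * frob (s • D + u • E) ^ 2) :
    |B D E - (L + μ) / 2 * tip D E| ≤ (L - μ) / 2 * frob D * frob E := by
  rcases eq_or_ne D 0 with rfl | hD
  · simp [tip, frob]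
  rcases eq_or_ne E 0 with rfl | hE
  · simp [tip, frob]
  refine abs_sub_mul_le_of_quadratic_sandwich (X := B D D) (Z := B E E) (frob_pos hD)
    (frob_pos hE) fun s u => ?_
  have hexpand : B (s • D + u • E) (s • D + u • E) =
      s ^ 2 * B D D + 2 * s * u * B D E + u ^ 2 * B E E := by
    simp only [map_add, map_smul, _root_.add_apply, _root_.smul_apply, smul_eq_mul, hBsymm]
    ring
  simpa only [hexpand, frob_smul_add_smul_sq] using hB s u

theorem abs_sub_sub_le_of_abs_deriv_sub_le {g g' : ℝ → ℝ} {c C : ℝ}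
    (hg : ∀ t ∈ Set.Icc (0 : ℝ) 1, HasDerivAt g (g' t) t)
    (hC : ∀ t ∈ Set.Icc (0 : ℝ) 1, |g' t - c| ≤ C) :
    |g 1 - g 0 - c| ≤ C := by
  have := norm_image_sub_le_of_norm_deriv_le_segment_01' (f := fun t => g t - t * c)
    (fun t ht => ((hg t ht).sub (hasDerivAt_mul_const c)).hasDerivWithinAt)
    (fun t ht => hC t (Set.Ico_subset_Icc_self ht))
  simpa [sub_sub, add_comm] using this

theorem key_gradient_inequality_general
    (d₁ d₂ k : ℕ)
    (φ : Matrix (Fin d₁) (Fin d₂) ℝ → ℝ) (hC2 : ContDiff ℝ 2 φ)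
    (L μ : ℝ)
    (hH : ∀ M E : Matrix (Fin d₁) (Fin d₂) ℝ, M.rank ≤ k → E.rank ≤ k →
      μ * frob E ^ 2 ≤ hess φ M E ∧ hess φ M E ≤ L * frob E ^ 2)
    (M₁ M₂ E : Matrix (Fin d₁) (Fin d₂) ℝ)
    (hrank : ∀ a b c : ℝ, (a • M₁ + b • M₂ + c • E).rank ≤ k) :
    |tip (gradM φ M₂ - gradM φ M₁) E - (L + μ)/2 * tip (M₂ - M₁) E| ≤
      (L - μ)/2 * frob (M₂ - M₁) * frob E := by
  set D := M₂ - M₁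
  have hline : ∀ t : ℝ, (1 - t) • M₁ + t • M₂ + (0 : ℝ) • E = M₁ + t • D := fun t => by module
  have hplane : ∀ s u : ℝ, (-s) • M₁ + s • M₂ + u • E = s • D + u • E := fun s u => by module
  have hsecond : ∀ t : ℝ,
      |fderiv ℝ (fderiv ℝ φ) (M₁ + t • D) D E - (L + μ) / 2 * tip D E| ≤
        (L - μ) / 2 * frob D * frob E := fun t =>
    abs_bilin_sub_tip_le _ (hC2.fderiv_fderiv_apply_comm _ _ _) fun s u => by
      simpa only [hess_eq_fderiv_fderiv hC2] using
        hH _ _ (hline t ▸ hrank _ _ _) (hplane s u ▸ hrank _ _ _)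
  have hmvt := abs_sub_sub_le_of_abs_deriv_sub_le
    (fun t _ => hC2.hasDerivAt_fderiv_apply_add_smul M₁ D E t) (fun t _ => hsecond t)
  rw [one_smul, zero_smul, add_zero, add_sub_cancel] at hmvt
  rw [tip_sub_left, tip_gradM, tip_gradM]
  exact hmvt

/-- Lemma: key inequality for restricted strongly convex and smooth functions. -/
theorem key_gradient_inequality
    (d₁ d₂ k : ℕ) (hk : 1 ≤ k)
    (φ : Matrix (Fin d₁) (Fin d₂) ℝ → ℝ) (hC2 : ContDiff ℝ 2 φ)
    (L μ : ℝ) (hμ0 : 0 ≤ μ) (hμL : μ ≤ L)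
    (hH : ∀ M E : Matrix (Fin d₁) (Fin d₂) ℝ, M.rank ≤ k → E.rank ≤ k →
      μ * frob E ^ 2 ≤ hess φ M E ∧ hess φ M E ≤ L * frob E ^ 2)
    (M₁ M₂ E : Matrix (Fin d₁) (Fin d₂) ℝ)
    (hrank : ∀ a b c : ℝ, (a • M₁ + b • M₂ + c • E).rank ≤ k) :
    |tip (gradM φ M₂ - gradM φ M₁) E - (L + μ)/2 * tip (M₂ - M₁) E| ≤
      (L - μ)/2 * frob (M₂ - M₁) * frob E :=
  key_gradient_inequality_general d₁ d₂ k φ hC2 L μ hH M₁ M₂ E hrank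

end
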